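/- Fix reals x ≥ 0, y ≥ 0, and ε > 0 small enough that sinh(ε/2) ≤ 1, and let Λ = Λ(x,y,ε) > 0 be defined by cosh(x/2) + cosh(y/2) = 2·sinh(ε/2)·sinh(Λ/2). Then ∫_ε^Λ E(x,y,z)·dz/tanh(z/2) = 2·log²(cosh((x-y)/4)/sinh(ε/2)) - 2·log²(cosh((x+y)/4)/sinh(ε/2)) + x·log(cosh((x+y)/4)·cosh((x-y)/4)/sinh²(ε/2)), where E(x,y,z) = R(x,2z,y) - x/2 and R(x,y,z) = x - log((cosh(y/2)+cosh((x+z)/2))/(cosh(y/2)+cosh((x-z)/2))). -/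

import Mathlib

/-- The function `R` appearing in the McShane--Norbury identities. -/
noncomputable def Rfun (x y z : ℝ) : ℝ :=
  x - Real.log ((Real.cosh (y / 2) + Real.cosh ((x + z) / 2)) /
      (Real.cosh (y / 2) + Real.cosh ((x - z) / 2)))

/-- The function `E` appearing in the McShane--Norbury identities. -/
noncomputable def Efun (x y z : ℝ) : ℝ := Rfun x (2 * z) y - x / 2

lemma cosh_double' (z : ℝ) : Real.cosh z = Real.cosh (z/2)^2 + Real.sinh (z/2)^2 := by
  have h := Real.cosh_add (z/2) (z/2)
  rw [show z/2 + z/2 = z by ring] at h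
  rw [h]; ring

lemma cosh_add_cosh' (z a : ℝ) :
    Real.cosh z + Real.cosh a = 2 * (Real.sinh (z/2)^2 + Real.cosh (a/2)^2) := by
  nlinarith [cosh_double' z, cosh_double' a, Real.cosh_sq (z/2), Real.cosh_sq (a/2)]

theorem E_integral_closed_form (x y ε Λ : ℝ)
    (hx : 0 ≤ x) (hy : 0 ≤ y) (hε : 0 < ε) (hsmall : Real.sinh (ε / 2) ≤ 1)
    (hΛ : 0 < Λ)
    (hdef : Real.cosh (x / 2) + Real.cosh (y / 2) =
      2 * Real.sinh (ε / 2) * Real.sinh (Λ / 2)) :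
    ∫ z in ε..Λ, Efun x y z / Real.tanh (z / 2) =
      2 * (Real.log (Real.cosh ((x - y) / 4) / Real.sinh (ε / 2))) ^ 2 -
        2 * (Real.log (Real.cosh ((x + y) / 4) / Real.sinh (ε / 2))) ^ 2 +
        x * Real.log (Real.cosh ((x + y) / 4) * Real.cosh ((x - y) / 4) /
          Real.sinh (ε / 2) ^ 2) := by
  set A := Real.cosh ((x + y) / 4) with hAdef
  set B := Real.cosh ((x - y) / 4) with hBdef
  set σ := Real.sinh (ε / 2) with hσdef
  have hσ0 : 0 < σ := Real.sinh_pos_iff.2 (by linarith)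
  have hA1 : 1 ≤ A := Real.one_le_cosh _
  have hB1 : 1 ≤ B := Real.one_le_cosh _
  have hA0 : 0 < A := by linarith
  have hB0 : 0 < B := by linarith
  have hsum : Real.cosh (x/2) + Real.cosh (y/2) = 2 * A * B := by
    have h1 := Real.cosh_add ((x+y)/4) ((x-y)/4)
    have h2 := Real.cosh_sub ((x+y)/4) ((x-y)/4)
    rw [show (x+y)/4 + (x-y)/4 = x/2 by ring] at h1
    rw [show (x+y)/4 - (x-y)/4 = y/2 by ring] at h2
    rw [h1, h2, ← hAdef, ← hBdef]; ring
  set L := A * B / σ with hLdef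
  have hL0 : 0 < L := by positivity
  have hL : Real.sinh (Λ/2) = L := by
    rw [hLdef, eq_div_iff hσ0.ne']
    have hd2 : Real.cosh (x/2) + Real.cosh (y/2) = 2 * σ * Real.sinh (Λ/2) := hdef
    linear_combination hsum / 2 - hd2 / 2
  have hσL : σ ≤ L := by
    rw [hLdef, le_div_iff₀ hσ0]
    nlinarith
  have h1L : 1 ≤ L := by
    rw [hLdef, le_div_iff₀ hσ0]
    nlinarith
  have hεΛ : ε ≤ Λ := by
    have hss : Real.sinh (ε/2) ≤ Real.sinh (Λ/2) := by
      rw [hL, ← hσdef]; linarith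
    have := Real.sinh_le_sinh.mp hss
    linarith
  -- the substituted integrand
  set g : ℝ → ℝ := fun s => (x / 2 - Real.log ((s^2 + A^2) / (s^2 + B^2))) / s with hgdef
  set h : ℝ → ℝ := fun s => Real.log ((s^2 + A^2) / (s^2 + B^2)) / s with hhdef
  have hgcA : ∀ s : ℝ, s ≠ 0 → ContinuousAt g s := by
    intro s hs
    have hne : ((s^2 + A^2) / (s^2 + B^2)) ≠ 0 := by positivity
    have hratio : Continuous fun s : ℝ => (s^2 + A^2) / (s^2 + B^2) := by
      apply Continuous.div (by fun_prop) (by fun_prop)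
      intro t; positivity
    exact (continuousAt_const.sub (hratio.continuousAt.log hne)).div continuousAt_id hs
  have hhcA : ∀ s : ℝ, s ≠ 0 → ContinuousAt h s := by
    intro s hs
    have hne : ((s^2 + A^2) / (s^2 + B^2)) ≠ 0 := by positivity
    have hratio : Continuous fun s : ℝ => (s^2 + A^2) / (s^2 + B^2) := by
      apply Continuous.div (by fun_prop) (by fun_prop)
      intro t; positivity
    exact (hratio.continuousAt.log hne).div continuousAt_id hs
  -- step 1: substitution s = sinh(z/2)
  have hrw : ∀ z : ℝ, Efun x y z / Real.tanh (z / 2)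
      = 2 * ((Real.cosh (z/2) / 2) • (g ∘ fun w => Real.sinh (w/2)) z) := by
    intro z
    have e1 : Real.cosh (2*z/2) + Real.cosh ((x+y)/2) = 2 * (Real.sinh (z/2)^2 + A^2) := by
      have := cosh_add_cosh' (2*z/2) ((x+y)/2)
      rw [show (2*z/2)/2 = z/2 by ring, show ((x+y)/2)/2 = (x+y)/4 by ring] at this
      rw [this, ← hAdef]
    have e2 : Real.cosh (2*z/2) + Real.cosh ((x-y)/2) = 2 * (Real.sinh (z/2)^2 + B^2) := by
      have := cosh_add_cosh' (2*z/2) ((x-y)/2)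
      rw [show (2*z/2)/2 = z/2 by ring, show ((x-y)/2)/2 = (x-y)/4 by ring] at this
      rw [this, ← hBdef]
    have hE : Efun x y z = x/2 -
        Real.log ((Real.sinh (z/2)^2 + A^2) / (Real.sinh (z/2)^2 + B^2)) := by
      unfold Efun Rfun
      rw [e1, e2, mul_div_mul_left _ _ (two_ne_zero)]
      ring
    rw [hE, Real.tanh_eq_sinh_div_cosh, div_div_eq_mul_div]
    show _ = 2 * ((Real.cosh (z/2) / 2) * g (Real.sinh (z/2)))
    rw [hgdef]
    ring
  have hzpos : ∀ z ∈ Set.uIcc ε Λ, 0 < z := by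
    intro z hz
    rw [Set.uIcc_of_le hεΛ] at hz
    linarith [hz.1]
  have hd1 : ∀ z ∈ Set.uIcc ε Λ, HasDerivAt (fun w => Real.sinh (w/2)) (Real.cosh (z/2) / 2) z := by
    intro z _
    have h1 : HasDerivAt (fun w : ℝ => w / 2) (1/2) z := (hasDerivAt_id z).div_const 2
    have := (Real.hasDerivAt_sinh (z/2)).comp z h1
    exact this.congr_deriv (by ring)
  have hc1 : ContinuousOn (fun z => Real.cosh (z/2) / 2) (Set.uIcc ε Λ) := by
    apply Continuous.continuousOn; fun_prop
  have hg1 : ContinuousOn g ((fun w => Real.sinh (w/2)) '' Set.uIcc ε Λ) := by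
    rintro s ⟨z, hz, rfl⟩
    have : (0:ℝ) < Real.sinh (z/2) := Real.sinh_pos_iff.2 (by linarith [hzpos z hz])
    exact (hgcA _ this.ne').continuousWithinAt
  have hsub1 := intervalIntegral.integral_comp_smul_deriv' hd1 hc1 hg1
  have step1 : ∫ z in ε..Λ, Efun x y z / Real.tanh (z / 2) = 2 * ∫ s in σ..L, g s := by
    rw [show (∫ z in ε..Λ, Efun x y z / Real.tanh (z / 2))
        = ∫ z in ε..Λ, 2 * ((Real.cosh (z/2) / 2) • (g ∘ fun w => Real.sinh (w/2)) z) from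
        intervalIntegral.integral_congr (fun z _ => hrw z)]
    rw [intervalIntegral.integral_const_mul, hsub1, hL, ← hσdef]
  -- positivity on the interval [σ, L]
  have hpos : ∀ s ∈ Set.uIcc σ L, 0 < s := by
    intro s hs
    rw [Set.uIcc_of_le hσL] at hs
    linarith [hs.1]
  have hzero : (0:ℝ) ∉ Set.uIcc σ L := fun h0 => lt_irrefl 0 (hpos 0 h0)
  have hhInt : IntervalIntegrable h MeasureTheory.volume σ L :=
    (ContinuousOn.intervalIntegrable (fun s hs => (hhcA s (hpos s hs).ne').continuousWithinAt))
  have hinvInt : IntervalIntegrable (fun s : ℝ => 1 / s) MeasureTheory.volume σ L :=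
    (ContinuousOn.intervalIntegrable (fun s hs =>
      (continuousAt_const.div continuousAt_id (hpos s hs).ne').continuousWithinAt))
  have hloginv : ∫ s in σ..L, (1:ℝ)/s = Real.log (L/σ) := integral_one_div hzero
  -- step 2: split off the x/2 part
  have hgsplit : ∀ s : ℝ, g s = (x/2) * (1/s) - h s := by
    intro s
    rw [hgdef, hhdef]
    show (x / 2 - Real.log ((s^2 + A^2) / (s^2 + B^2))) / s
      = x/2 * (1/s) - Real.log ((s^2 + A^2) / (s^2 + B^2)) / s
    rw [sub_div]; ring
  have step2 : ∫ s in σ..L, g s = (x/2) * Real.log (L/σ) - ∫ s in σ..L, h s := by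
    rw [intervalIntegral.integral_congr (fun s _ => hgsplit s),
      intervalIntegral.integral_sub (hinvInt.const_mul _) hhInt,
      intervalIntegral.integral_const_mul, hloginv]
  -- step 3: the symmetry s ↦ A*B/s evaluates ∫ h
  have hd2 : ∀ t ∈ Set.uIcc σ L, HasDerivAt (fun t => A*B/t) (-(A*B)/t^2) t := by
    intro t ht
    have ht0 : t ≠ 0 := (hpos t ht).ne'
    have hder := (hasDerivAt_const t (A*B)).div (hasDerivAt_id t) ht0
    simp at hder
    exact hder
  have hc2 : ContinuousOn (fun t => -(A*B)/t^2) (Set.uIcc σ L) := by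
    intro t ht
    have ht0 : t ≠ 0 := (hpos t ht).ne'
    exact (continuousAt_const.div ((continuous_pow 2).continuousAt)
      (pow_ne_zero 2 ht0)).continuousWithinAt
  have hh2 : ContinuousOn h ((fun t => A*B/t) '' Set.uIcc σ L) := by
    rintro s ⟨t, ht, rfl⟩
    have ht0 : (0:ℝ) < t := hpos t ht
    have : (0:ℝ) < A*B/t := by positivity
    exact (hhcA _ this.ne').continuousWithinAt
  have hpoint : ∀ t ∈ Set.uIcc σ L,
      (-(A*B)/t^2) • h (A*B/t) = h t - 2 * Real.log (A/B) * (1/t) := by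
    intro t ht
    have ht0 : 0 < t := hpos t ht
    have hu : (0:ℝ) < t^2 + A^2 := by positivity
    have hv : (0:ℝ) < t^2 + B^2 := by positivity
    have hr3 : ((A*B/t)^2 + A^2) / ((A*B/t)^2 + B^2)
        = (A/B)^2 * ((t^2+B^2)/(t^2+A^2)) := by
      field_simp
      ring
    have hlog : Real.log (((A*B/t)^2 + A^2) / ((A*B/t)^2 + B^2))
        = 2 * Real.log (A/B) - Real.log ((t^2+A^2)/(t^2+B^2)) := by
      rw [hr3, Real.log_mul (by positivity) (by positivity),
        Real.log_pow, Real.log_div hu.ne' hv.ne', Real.log_div hv.ne' hu.ne']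
      push_cast; ring
    rw [hhdef]
    show (-(A*B)/t^2) • (Real.log (((A*B/t)^2 + A^2) / ((A*B/t)^2 + B^2)) / (A*B/t))
      = Real.log ((t^2 + A^2) / (t^2 + B^2)) / t - 2 * Real.log (A/B) * (1/t)
    rw [hlog, smul_eq_mul]
    field_simp
    ring
  have hfσ : A*B/σ = L := hLdef.symm
  have hfL : A*B/L = σ := by rw [hLdef]; field_simp
  have hsub2 := intervalIntegral.integral_comp_smul_deriv' hd2 hc2 hh2
  have hK : ∫ t in σ..L, h t = Real.log (A/B) * Real.log (L/σ) := by
    rw [hfσ, hfL] at hsub2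
    simp only [Function.comp] at hsub2
    rw [intervalIntegral.integral_congr hpoint] at hsub2
    rw [intervalIntegral.integral_sub hhInt ((hinvInt.const_mul _)),
      intervalIntegral.integral_const_mul, hloginv,
      intervalIntegral.integral_symm σ L] at hsub2
    linarith
  -- final assembly
  have hLσ : L / σ = A * B / σ^2 := by rw [hLdef]; field_simp
  rw [step1, step2, hK, hLσ]
  have e1 : Real.log (A * B / σ^2) = Real.log A + Real.log B - 2 * Real.log σ := by
    rw [Real.log_div (by positivity) (by positivity), Real.log_mul hA0.ne' hB0.ne',
      Real.log_pow]
    push_cast; ring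
  have e2 : Real.log (A/B) = Real.log A - Real.log B := Real.log_div hA0.ne' hB0.ne'
  have e3 : Real.log (A/σ) = Real.log A - Real.log σ := Real.log_div hA0.ne' hσ0.ne'
  have e4 : Real.log (B/σ) = Real.log B - Real.log σ := Real.log_div hB0.ne' hσ0.ne'
  rw [e1, e2, e3, e4]
  ring
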